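/- arXiv:2602.22062 — 3 statements merged into one kernel-verified Lean document; each statement's English description precedes it below -/
import Mathlib

section
/- Let Q_z(y) be a family of probability densities on Y indexed by z, let Q_⋆(y) = E_{z∼H}[Q_z(y)], and let Q̂_N(y) = N^{-1} ∑_{n=1}^N Q_{z_n}(y) with z_1,...,z_N i.i.d. from H. Then the expected chi-squared divergence satisfies E[D_{χ²}(Q̂_N, Q_⋆)] = N^{-1} ∫ Var_{z∼H}(Q_z(y)) / Q_⋆(y) dy. In particular, if there exists an integrable function C(y) with Var_{z∼H}(Q_z(y)) ≤ C(y)·Q_⋆(y) for all y, then E[D_{χ²}(Q̂_N, Q_⋆)] ≤ N^{-1} ∫ C(y) dy → 0 as N → ∞. -/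
open MeasureTheory Filter ProbabilityTheory

/-! After swapping the two integrals, the inner expectation at a fixed `y` is the mean square
deviation of the average of `N` i.i.d. copies of `Q_z(y)` from its mean `Q⋆(y)`, i.e. the variance
of that average; as variances of independent variables add, it is `Var_z(Q_z(y)) / N`. Integrating
the bound `Var_z(Q_z(y)) / Q⋆(y) ≤ C(y)` gives the rest. -/

theorem integral_sq_average_pi_sub_integral {Z : Type*} [MeasurableSpace Z]
    (H : Measure Z) [IsProbabilityMeasure H] {f : Z → ℝ} (hf : MemLp f 2 H) {m : ℝ}
    (hm : ∫ x, f x ∂H = m) {N : ℕ} (hN : 0 < N) :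
    ∫ z, ((N : ℝ)⁻¹ * ∑ n, f (z n) - m) ^ 2 ∂(Measure.pi fun _ : Fin N => H)
      = (N : ℝ)⁻¹ * Var[f; H] := by
  have hsum : MemLp (fun z : Fin N → Z => ∑ n, f (z n)) 2 (Measure.pi fun _ => H) :=
    memLp_finsetSum _ fun n _ => hf.comp_measurePreserving (measurePreserving_eval _ n)
  have hmean : ∫ z, (N : ℝ)⁻¹ * ∑ n, f (z n) ∂(Measure.pi fun _ : Fin N => H) = m := by
    rw [integral_const_mul, integral_finsetSum _ fun n _ =>
      integrable_comp_eval (hf.integrable one_le_two), Finset.sum_congr rfl fun n _ =>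
      integral_comp_eval (μ := fun _ : Fin N => H) (i := n) hf.aestronglyMeasurable]
    simp only [hm, Finset.sum_const, Finset.card_univ, Fintype.card_fin, nsmul_eq_mul]
    field_simp
  have hvar : Var[fun z : Fin N → Z => ∑ n, f (z n); Measure.pi fun _ => H] = N * Var[f; H] := by
    have := variance_sum_pi (μ := fun _ : Fin N => H) (X := fun _ => f) fun _ => hf
    simpa [Finset.sum_fn] using this
  rw [← hmean, ← variance_eq_integral (hsum.const_mul _).aemeasurable, variance_const_mul, hvar]
  field_simp

theorem expected_chiSq_of_empirical_mixture_general
    {Z Y : Type*} [MeasurableSpace Z] [MeasurableSpace Y]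
    (Hm : Measure Z) [IsProbabilityMeasure Hm] (μ : Measure Y) [SigmaFinite μ]
    (Q : Z → Y → ℝ)
    (Qs : Y → ℝ) (hQs : ∀ y, Qs y = ∫ z, Q z y ∂Hm) (hQspos : ∀ y, 0 < Qs y)
    (hInt1 : ∀ y, Integrable (fun z => Q z y) Hm)
    (hInt2 : ∀ y, Integrable (fun z => (Q z y - Qs y) ^ 2) Hm)
    (hIntVar : Integrable (fun y => (∫ z, (Q z y - Qs y) ^ 2 ∂Hm) / Qs y) μ)
    (hFubini : ∀ N : ℕ, 0 < N →
      Integrable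
        (fun p : (Fin N → Z) × Y =>
          ((N : ℝ)⁻¹ * ∑ n, Q (p.1 n) p.2 - Qs p.2) ^ 2 / Qs p.2)
        ((Measure.pi fun _ : Fin N => Hm).prod μ)) :
    (∀ N : ℕ, 0 < N →
      ∫ z, (∫ y, ((N : ℝ)⁻¹ * ∑ n, Q (z n) y - Qs y) ^ 2 / Qs y ∂μ)
          ∂(Measure.pi fun _ : Fin N => Hm)
        = (N : ℝ)⁻¹ * ∫ y, (∫ z, (Q z y - Qs y) ^ 2 ∂Hm) / Qs y ∂μ) ∧
    ∀ C : Y → ℝ, Integrable C μ →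
      (∀ y, (∫ z, (Q z y - Qs y) ^ 2 ∂Hm) ≤ C y * Qs y) →
      (∀ N : ℕ, 0 < N →
        ∫ z, (∫ y, ((N : ℝ)⁻¹ * ∑ n, Q (z n) y - Qs y) ^ 2 / Qs y ∂μ)
            ∂(Measure.pi fun _ : Fin N => Hm)
          ≤ (N : ℝ)⁻¹ * ∫ y, C y ∂μ) ∧
      Tendsto
        (fun N : ℕ =>
          ∫ z, (∫ y, ((N : ℝ)⁻¹ * ∑ n, Q (z n) y - Qs y) ^ 2 / Qs y ∂μ)
            ∂(Measure.pi fun _ : Fin N => Hm))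
        atTop (nhds 0) := by
  have hvar : ∀ y, Var[fun z => Q z y; Hm] = ∫ z, (Q z y - Qs y) ^ 2 ∂Hm := fun y => by
    rw [variance_eq_integral (hInt1 y).aemeasurable, ← hQs y]
  have hmemLp : ∀ y, MemLp (fun z => Q z y) 2 Hm := fun y => by
    have hdev := (hInt1 y).sub (integrable_const (Qs y))
    simpa using ((memLp_two_iff_integrable_sq hdev.aestronglyMeasurable).2 (hInt2 y)).add
      (memLp_const (Qs y))
  set V := ∫ y, (∫ z, (Q z y - Qs y) ^ 2 ∂Hm) / Qs y ∂μ
  have hexpect : ∀ N : ℕ, 0 < N →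
      ∫ z, (∫ y, ((N : ℝ)⁻¹ * ∑ n, Q (z n) y - Qs y) ^ 2 / Qs y ∂μ)
          ∂(Measure.pi fun _ : Fin N => Hm) = (N : ℝ)⁻¹ * V := fun N hN => by
    rw [integral_integral_swap (hFubini N hN), ← integral_const_mul]
    refine integral_congr_ae (ae_of_all _ fun y => ?_)
    simp only
    rw [integral_div, integral_sq_average_pi_sub_integral Hm (hmemLp y) (hQs y).symm hN,
      hvar y, mul_div_assoc]
  refine ⟨hexpect, fun C hC hVarC => ⟨fun N hN => ?_, ?_⟩⟩
  · have hVC : V ≤ ∫ y, C y ∂μ :=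
      integral_mono hIntVar hC fun y => (div_le_iff₀ (hQspos y)).2 (hVarC y)
    rw [hexpect N hN]
    gcongr
  · have hlim : Tendsto (fun N : ℕ => (N : ℝ)⁻¹ * V) atTop (nhds 0) := by
      simpa using tendsto_inv_atTop_nhds_zero_nat.mul_const V
    exact hlim.congr' ((eventually_gt_atTop 0).mono fun N hN => (hexpect N hN).symm)

/-- Expected chi-squared divergence of an empirical mixture from its population mixture:
if `Q̂_N(y) = N⁻¹ ∑ₙ Q_{zₙ}(y)` with `z₁,…,z_N` i.i.d. from `H`, and
`Q⋆(y) = E_{z∼H}[Q_z(y)]`, then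
`E[D_χ²(Q̂_N, Q⋆)] = N⁻¹ ∫ Var_{z∼H}(Q_z(y)) / Q⋆(y) dy`; in particular, if
`Var_{z∼H}(Q_z(y)) ≤ C(y) Q⋆(y)` with `C` integrable, then
`E[D_χ²(Q̂_N, Q⋆)] ≤ N⁻¹ ∫ C → 0` as `N → ∞`. -/
theorem expected_chiSq_of_empirical_mixture
    {Z Y : Type*} [MeasurableSpace Z] [MeasurableSpace Y]
    (Hm : Measure Z) [IsProbabilityMeasure Hm] (μ : Measure Y) [SigmaFinite μ]
    (Q : Z → Y → ℝ) (hQmeas : Measurable (Function.uncurry Q))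
    (hQnonneg : ∀ z y, 0 ≤ Q z y)
    (Qs : Y → ℝ) (hQs : ∀ y, Qs y = ∫ z, Q z y ∂Hm) (hQspos : ∀ y, 0 < Qs y)
    (hInt1 : ∀ y, Integrable (fun z => Q z y) Hm)
    (hInt2 : ∀ y, Integrable (fun z => (Q z y - Qs y) ^ 2) Hm)
    (hIntVar : Integrable (fun y => (∫ z, (Q z y - Qs y) ^ 2 ∂Hm) / Qs y) μ)
    (hFubini : ∀ N : ℕ, 0 < N →
      Integrable
        (fun p : (Fin N → Z) × Y =>
          ((N : ℝ)⁻¹ * ∑ n, Q (p.1 n) p.2 - Qs p.2) ^ 2 / Qs p.2)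
        ((Measure.pi fun _ : Fin N => Hm).prod μ)) :
    (∀ N : ℕ, 0 < N →
      ∫ z, (∫ y, ((N : ℝ)⁻¹ * ∑ n, Q (z n) y - Qs y) ^ 2 / Qs y ∂μ)
          ∂(Measure.pi fun _ : Fin N => Hm)
        = (N : ℝ)⁻¹ * ∫ y, (∫ z, (Q z y - Qs y) ^ 2 ∂Hm) / Qs y ∂μ) ∧
    ∀ C : Y → ℝ, Integrable C μ →
      (∀ y, (∫ z, (Q z y - Qs y) ^ 2 ∂Hm) ≤ C y * Qs y) →
      (∀ N : ℕ, 0 < N →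
        ∫ z, (∫ y, ((N : ℝ)⁻¹ * ∑ n, Q (z n) y - Qs y) ^ 2 / Qs y ∂μ)
            ∂(Measure.pi fun _ : Fin N => Hm)
          ≤ (N : ℝ)⁻¹ * ∫ y, C y ∂μ) ∧
      Tendsto
        (fun N : ℕ =>
          ∫ z, (∫ y, ((N : ℝ)⁻¹ * ∑ n, Q (z n) y - Qs y) ^ 2 / Qs y ∂μ)
            ∂(Measure.pi fun _ : Fin N => Hm))
        atTop (nhds 0) :=
  expected_chiSq_of_empirical_mixture_general Hm μ Q Qs hQs hQspos hInt1 hInt2 hIntVar hFubini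
end

section
/- Let P(y|h) = (Wh)^y e^{−Wh}/y! with h ∼ Gamma(α, β), W, α, β > 0. Define C(y) = E_h[P(y|h)²] / E_h[P(y|h)]. Then C(y) = (W^y Γ(2y+α)/(y! Γ(y+α))) ((W+β)/(2W+β))^{y+α} (2W+β)^{−y}, and the series ∑_{y=0}^∞ C(y) converges. In particular, C(y) decays geometrically with ratio (4W² + 4Wβ)/(4W² + β² + 4Wβ) < 1 up to subexponential factors. -/
open MeasureTheory Real Filter Topology Set
open scoped Nat

/-!
Multiplying `P(y|h)^k` by the Gamma(α, β) density leaves a constant multiple of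
`h^(ky+α-1) e^(-(kW+β)h)`, so both moments are Gamma integrals, and their quotient is
`((W+β)/(2W+β))^α · Γ(2y+α)/(y! Γ(y+α)) · q^y` with `q = W(W+β)/(2W+β)²`.
Successive ratios of the Gamma coefficient are `(2y+α)(2y+α+1)/((y+1)(y+α)) → 4`, and
`4q < 1` because `(2W+β)² - 4W(W+β) = β² > 0`, so the ratio test applies.
-/

noncomputable section

def poissonLik (W h : ℝ) (y : ℕ) : ℝ := (W * h) ^ y * exp (-(W * h)) / y !

def gammaDensity (α β h : ℝ) : ℝ := β ^ α * h ^ (α - 1) * exp (-(β * h)) / Gamma α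

/-- For `α = 1` this is the central binomial coefficient `(2y).choose y`. -/
def gammaCentralBinom (α : ℝ) (y : ℕ) : ℝ := Gamma (2 * y + α) / (y ! * Gamma (y + α))

end

section gammaCentralBinom

variable {α : ℝ}

lemma gammaCentralBinom_pos (hα : 0 < α) (y : ℕ) : 0 < gammaCentralBinom α y := by
  unfold gammaCentralBinom
  positivity

lemma gammaCentralBinom_succ (hα : 0 < α) (y : ℕ) :
    gammaCentralBinom α (y + 1) =
      (2 * y + α) * (2 * y + α + 1) / ((y + 1) * (y + α)) * gammaCentralBinom α y := by
  have hΓ₂ : Gamma (2 * ((y + 1 : ℕ) : ℝ) + α) =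
      (2 * y + α + 1) * ((2 * y + α) * Gamma (2 * y + α)) := by
    rw [show 2 * ((y + 1 : ℕ) : ℝ) + α = 2 * y + α + 1 + 1 by push_cast; ring,
      Gamma_add_one (by positivity), Gamma_add_one (by positivity)]
  have hΓ₁ : Gamma (((y + 1 : ℕ) : ℝ) + α) = (y + α) * Gamma (y + α) := by
    rw [show ((y + 1 : ℕ) : ℝ) + α = y + α + 1 by push_cast; ring, Gamma_add_one (by positivity)]
  unfold gammaCentralBinom
  rw [hΓ₂, hΓ₁, Nat.factorial_succ]
  push_cast
  field_simp

lemma tendsto_gammaCentralBinom_succ_div (α : ℝ) :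
    Tendsto (fun y : ℕ => (2 * y + α) * (2 * y + α + 1) / ((y + 1) * (y + α))) atTop (𝓝 4) := by
  have h := (tendsto_add_mul_div_add_mul_atTop_nhds α 1 2 one_ne_zero).mul
    (tendsto_add_mul_div_add_mul_atTop_nhds (α + 1) α 2 one_ne_zero)
  rw [show (4 : ℝ) = 2 / 1 * (2 / 1) by norm_num]
  refine h.congr fun y => ?_
  rw [mul_div_mul_comm]
  ring

lemma summable_gammaCentralBinom_mul_pow (hα : 0 < α) {q : ℝ} (hq₀ : 0 < q) (hq : 4 * q < 1) :
    Summable fun y => gammaCentralBinom α y * q ^ y := by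
  refine summable_of_ratio_test_tendsto_lt_one hq
    (Eventually.of_forall fun y => (mul_pos (gammaCentralBinom_pos hα y) (pow_pos hq₀ y)).ne') ?_
  refine ((tendsto_gammaCentralBinom_succ_div α).mul_const q).congr fun y => ?_
  have hg := gammaCentralBinom_pos hα y
  rw [norm_mul, norm_mul, norm_pow, norm_pow, norm_of_nonneg hq₀.le, norm_of_nonneg hg.le,
    norm_of_nonneg (gammaCentralBinom_pos hα _).le,
    gammaCentralBinom_succ hα]
  field_simp
  ring

end gammaCentralBinom

section PoissonGamma

variable {W α β : ℝ}

lemma integral_poissonLik_pow_mul_gammaDensity (k y : ℕ) (hα : 0 < α)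
    (hc : 0 < k * W + β) :
    ∫ h in Ioi 0, poissonLik W h y ^ k * gammaDensity α β h
      = W ^ (k * y) * β ^ α / ((y ! : ℝ) ^ k * Gamma α) *
          ((1 / (k * W + β)) ^ ((k : ℝ) * y + α) * Gamma ((k : ℝ) * y + α)) := by
  rw [← integral_rpow_mul_exp_neg_mul_Ioi (by positivity) hc, ← integral_const_mul]
  refine setIntegral_congr_fun measurableSet_Ioi fun h (hh : 0 < h) => ?_
  have hpow : h ^ ((k : ℝ) * y + α - 1) = h ^ (k * y) * h ^ (α - 1) := by
    rw [add_sub_assoc, rpow_add hh, ← Nat.cast_mul, rpow_natCast]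
  have hexp : exp (-(W * h)) ^ k * exp (-(β * h)) = exp (-((k * W + β) * h)) := by
    rw [← exp_nat_mul, ← exp_add]
    ring_nf
  simp only [poissonLik, gammaDensity, hpow, ← hexp]
  ring

lemma poissonGamma_moment_ratio_eq (hW : 0 < W) (hα : 0 < α) (hβ : 0 < β) (y : ℕ) :
    (∫ h in Ioi 0, poissonLik W h y ^ 2 * gammaDensity α β h) /
        (∫ h in Ioi 0, poissonLik W h y * gammaDensity α β h)
      = W ^ y * Gamma (2 * y + α) / (y ! * Gamma (y + α)) *
          ((W + β) / (2 * W + β)) ^ ((y : ℝ) + α) * (2 * W + β) ^ (-(y : ℝ)) := by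
  have m₁ := integral_poissonLik_pow_mul_gammaDensity 1 y (W := W) (β := β) hα (by positivity)
  have m₂ := integral_poissonLik_pow_mul_gammaDensity 2 y (W := W) (β := β) hα (by positivity)
  simp only [pow_one, Nat.cast_one, one_mul, Nat.cast_ofNat] at m₁ m₂
  have hWβ : 0 < W + β := by positivity
  have h2Wβ : 0 < 2 * W + β := by positivity
  rw [m₁, m₂, div_rpow hWβ.le h2Wβ.le, rpow_neg h2Wβ.le, one_div, one_div, inv_rpow hWβ.le,
    inv_rpow h2Wβ.le, show 2 * (y : ℝ) + α = y + (y + α) by ring, rpow_add h2Wβ, rpow_natCast]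
  field_simp
  ring

lemma poissonGamma_moment_ratio_eq_geometric (hW : 0 < W) (hβ : 0 < β) (y : ℕ) :
    W ^ y * Gamma (2 * y + α) / (y ! * Gamma (y + α)) *
        ((W + β) / (2 * W + β)) ^ ((y : ℝ) + α) * (2 * W + β) ^ (-(y : ℝ))
      = ((W + β) / (2 * W + β)) ^ α *
          (gammaCentralBinom α y * (W * (W + β) / (2 * W + β) ^ 2) ^ y) := by
  rw [rpow_add (by positivity), rpow_neg (by positivity), rpow_natCast, rpow_natCast,
    gammaCentralBinom, div_pow, div_pow, mul_pow, ← pow_mul]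
  field_simp
  ring

end PoissonGamma

/-- For the Poisson–Gamma model `P(y|h) = (Wh)^y e^{−Wh}/y!`, `h ∼ Gamma(α,β)`, the
ratio of second to first moment `C(y) = E_h[P(y|h)²] / E_h[P(y|h)]` equals
`(W^y Γ(2y+α)/(y! Γ(y+α))) ((W+β)/(2W+β))^{y+α} (2W+β)^{−y}`, the series `∑ C(y)`
converges, and the geometric ratio `(4W² + 4Wβ)/(4W² + β² + 4Wβ)` is `< 1`. -/
theorem poisson_gamma_moment_ratio_summable (W α β : ℝ)
    (hW : 0 < W) (hα : 0 < α) (hβ : 0 < β) :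
    (∀ y : ℕ,
      (∫ h in Set.Ioi (0 : ℝ),
          ((W * h) ^ y * Real.exp (-(W * h)) / (Nat.factorial y)) ^ 2 *
            (β ^ α * h ^ (α - 1) * Real.exp (-(β * h)) / Real.Gamma α)) /
        (∫ h in Set.Ioi (0 : ℝ),
          ((W * h) ^ y * Real.exp (-(W * h)) / (Nat.factorial y)) *
            (β ^ α * h ^ (α - 1) * Real.exp (-(β * h)) / Real.Gamma α))
      = (W ^ y * Real.Gamma (2 * (y : ℝ) + α) /
            ((Nat.factorial y) * Real.Gamma ((y : ℝ) + α))) *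
          ((W + β) / (2 * W + β)) ^ ((y : ℝ) + α) *
          (2 * W + β) ^ (-(y : ℝ))) ∧
    Summable (fun y : ℕ =>
      (∫ h in Set.Ioi (0 : ℝ),
          ((W * h) ^ y * Real.exp (-(W * h)) / (Nat.factorial y)) ^ 2 *
            (β ^ α * h ^ (α - 1) * Real.exp (-(β * h)) / Real.Gamma α)) /
        (∫ h in Set.Ioi (0 : ℝ),
          ((W * h) ^ y * Real.exp (-(W * h)) / (Nat.factorial y)) *
            (β ^ α * h ^ (α - 1) * Real.exp (-(β * h)) / Real.Gamma α))) ∧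
    (4 * W ^ 2 + 4 * W * β) / (4 * W ^ 2 + β ^ 2 + 4 * W * β) < 1 := by
  have hC := poissonGamma_moment_ratio_eq hW hα hβ
  have hratio : (4 * W ^ 2 + 4 * W * β) / (4 * W ^ 2 + β ^ 2 + 4 * W * β) < 1 := by
    rw [div_lt_one (by positivity)]
    linarith [pow_pos hβ 2]
  have hq : 4 * (W * (W + β) / (2 * W + β) ^ 2) < 1 := by
    convert hratio using 1
    field_simp
    ring
  refine ⟨hC, ?_, hratio⟩
  have hsum := (summable_gammaCentralBinom_mul_pow hα (by positivity) hq).mul_left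
    (((W + β) / (2 * W + β)) ^ α)
  simp only [← poissonGamma_moment_ratio_eq_geometric hW hβ, ← hC] at hsum
  exact hsum
end

section
/- Consider a loss R_N(K) = ∑_{k=1}^K N_k^{(K)} · max(0, D_N^{(K,k)} − ρ) defined for K in a finite set {1,...,K_max}, where N_k^{(K)} → ∞ in probability. Suppose (i) for K = K_o, each D_N^{(K_o,k)} converges in probability to a limit strictly less than ρ, and (ii) for each K < K_o, there exists k with D_N^{(K,k)} converging in probability to a limit strictly greater than ρ. Then the estimator K̂_N = min argmin_{K} R_N(K) satisfies Pr(K̂_N = K_o) → 1. -/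
open MeasureTheory Filter

/-- Abstract model-selection consistency for the accumulated cutoff discrepancy loss
`R_N(K) = ∑_{k=1}^K N_k^{(K)} max(0, D_N^{(K,k)} − ρ)`:
if (i) for `K = K_o` each component discrepancy converges in probability to a limit
strictly below `ρ`, (ii) for each `K < K_o` some component discrepancy converges in
probability to a limit strictly above `ρ`, and the counts `N_k^{(K)} → ∞` in
probability, then the smallest-minimizer estimator `K̂_N` satisfies
`Pr(K̂_N = K_o) → 1`. -/
theorem acdc_model_selection_consistency
    {Ω : Type*} [MeasurableSpace Ω] (P : Measure Ω) [IsProbabilityMeasure P]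
    (Kmax Ko : ℕ) (hKo1 : 1 ≤ Ko) (hKoMax : Ko ≤ Kmax)
    (ρ : ℝ) (hρ : 0 < ρ)
    (D : ℕ → ℕ → ℕ → Ω → ℝ)
    (hDmeas : ∀ N K k, Measurable (D N K k))
    (Nk : ℕ → ℕ → ℕ → Ω → ℕ)
    (hNkmeas : ∀ N K k, Measurable (Nk N K k))
    (hNkpos : ∀ N K k ω, 0 < Nk N K k ω)
    (hNkinf : ∀ K k, 1 ≤ K → K ≤ Kmax → 1 ≤ k → k ≤ K → ∀ M : ℝ,
      Tendsto (fun N => P {ω | (Nk N K k ω : ℝ) ≤ M}) atTop (nhds 0))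
    (L : ℕ → ℝ)
    (hLlt : ∀ k, 1 ≤ k → k ≤ Ko → L k < ρ)
    (hKoConv : ∀ k, 1 ≤ k → k ≤ Ko →
      TendstoInMeasure P (fun N => D N Ko k) atTop (fun _ => L k))
    (hUnder : ∀ K, 1 ≤ K → K < Ko → ∃ k L', 1 ≤ k ∧ k ≤ K ∧ ρ < L' ∧
      TendstoInMeasure P (fun N => D N K k) atTop (fun _ => L'))
    (R : ℕ → ℕ → Ω → ℝ)
    (hR : ∀ N K ω,
      R N K ω = ∑ k ∈ Finset.Icc 1 K, (Nk N K k ω : ℝ) * max 0 (D N K k ω - ρ))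
    (Khat : ℕ → Ω → ℕ)
    (hKhatMem : ∀ N ω, Khat N ω ∈ Finset.Icc 1 Kmax)
    (hKhatMin : ∀ N ω, ∀ K ∈ Finset.Icc 1 Kmax, R N (Khat N ω) ω ≤ R N K ω)
    (hKhatSmallest : ∀ N ω, ∀ K ∈ Finset.Icc 1 Kmax,
      (∀ K' ∈ Finset.Icc 1 Kmax, R N K ω ≤ R N K' ω) → Khat N ω ≤ K) :
    Tendsto (fun N => P {ω | Khat N ω = Ko}) atTop (nhds 1) := by

  classical
  -- choice of underfitting witnesses
  have hUnder' : ∀ K, ∃ kl : ℕ × ℝ, 1 ≤ K → K < Ko →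
      (1 ≤ kl.1 ∧ kl.1 ≤ K ∧ ρ < kl.2 ∧
        TendstoInMeasure P (fun N => D N K kl.1) atTop (fun _ => kl.2)) := by
    intro K
    by_cases h : 1 ≤ K ∧ K < Ko
    · obtain ⟨k, L', h1, h2, h3, h4⟩ := hUnder K h.1 h.2
      exact ⟨(k, L'), fun _ _ => ⟨h1, h2, h3, h4⟩⟩
    · exact ⟨(1, ρ + 1), fun h1 h2 => absurd ⟨h1, h2⟩ h⟩
  choose cl hcl using hUnder'
  set c : ℕ → ℕ := fun K => (cl K).1 with hc
  set l : ℕ → ℝ := fun K => (cl K).2 with hl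
  -- bad events
  set A : ℕ → ℕ → Set Ω := fun N k => {ω | ρ - L k ≤ dist (D N Ko k ω) (L k)} with hA
  set B : ℕ → ℕ → Set Ω := fun N K => {ω | l K - ρ ≤ dist (D N K (c K) ω) (l K)} with hB
  -- good implies Khat = Ko
  have key : ∀ N ω, (∀ k ∈ Finset.Icc 1 Ko, ω ∉ A N k) →
      (∀ K ∈ Finset.Icc 1 (Ko - 1), ω ∉ B N K) → Khat N ω = Ko := by
    intro N ω hgA hgB
    have hRnonneg : ∀ K, 0 ≤ R N K ω := by
      intro K
      rw [hR]
      refine Finset.sum_nonneg fun k _ => mul_nonneg (by positivity) (le_max_left _ _)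
    have hRKo : R N Ko ω = 0 := by
      rw [hR]
      refine Finset.sum_eq_zero fun k hk => ?_
      have hk1 := (Finset.mem_Icc.mp hk).1
      have hk2 := (Finset.mem_Icc.mp hk).2
      have hnA := hgA k hk
      simp only [hA, Set.mem_setOf_eq, not_le, Real.dist_eq] at hnA
      have : D N Ko k ω - ρ ≤ 0 := by
        have h1 : D N Ko k ω - L k ≤ |D N Ko k ω - L k| := le_abs_self _
        linarith
      rw [max_eq_left this, mul_zero]
    have hRlt : ∀ K, 1 ≤ K → K < Ko → 0 < R N K ω := by
      intro K h1 h2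
      have hKmem : K ∈ Finset.Icc 1 (Ko - 1) := Finset.mem_Icc.mpr ⟨h1, by omega⟩
      have hnB := hgB K hKmem
      simp only [hB, Set.mem_setOf_eq, not_le, Real.dist_eq] at hnB
      obtain ⟨hck1, hck2, hlρ, _⟩ := hcl K h1 h2
      rw [hR]
      refine Finset.sum_pos' (fun k _ => mul_nonneg (by positivity) (le_max_left _ _)) ?_
      refine ⟨c K, Finset.mem_Icc.mpr ⟨hck1, hck2⟩, ?_⟩
      have hpos : 0 < D N K (c K) ω - ρ := by
        have h1' : -(l K - ρ) < D N K (c K) ω - l K := neg_lt_of_abs_lt hnB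
        linarith
      have : max 0 (D N K (c K) ω - ρ) = D N K (c K) ω - ρ := max_eq_right hpos.le
      rw [this]
      exact mul_pos (by exact_mod_cast hNkpos N K (c K) ω) hpos
    have hKoMem : Ko ∈ Finset.Icc 1 Kmax := Finset.mem_Icc.mpr ⟨hKo1, hKoMax⟩
    have hle : Khat N ω ≤ Ko := by
      refine hKhatSmallest N ω Ko hKoMem fun K' _ => ?_
      rw [hRKo]; exact hRnonneg K'
    have hge : Ko ≤ Khat N ω := by
      by_contra hlt
      push_neg at hlt
      have h1 : 1 ≤ Khat N ω := (Finset.mem_Icc.mp (hKhatMem N ω)).1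
      have hpos := hRlt (Khat N ω) h1 hlt
      have := hKhatMin N ω Ko hKoMem
      rw [hRKo] at this
      linarith
    omega
  -- bound on the bad probability
  have hbound : ∀ N, P {ω | Khat N ω ≠ Ko} ≤
      (∑ k ∈ Finset.Icc 1 Ko, P (A N k)) + ∑ K ∈ Finset.Icc 1 (Ko - 1), P (B N K) := by
    intro N
    have hsub : {ω | Khat N ω ≠ Ko} ⊆
        (⋃ k ∈ Finset.Icc 1 Ko, A N k) ∪ ⋃ K ∈ Finset.Icc 1 (Ko - 1), B N K := by
      intro ω hω
      by_contra hcon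
      simp only [Set.mem_union, Set.mem_iUnion, not_or, not_exists] at hcon
      exact hω (key N ω (fun k hk => hcon.1 k hk) (fun K hK => hcon.2 K hK))
    calc P {ω | Khat N ω ≠ Ko} ≤
        P ((⋃ k ∈ Finset.Icc 1 Ko, A N k) ∪ ⋃ K ∈ Finset.Icc 1 (Ko - 1), B N K) :=
          measure_mono hsub
      _ ≤ P (⋃ k ∈ Finset.Icc 1 Ko, A N k) + P (⋃ K ∈ Finset.Icc 1 (Ko - 1), B N K) :=
          measure_union_le _ _
      _ ≤ (∑ k ∈ Finset.Icc 1 Ko, P (A N k)) + ∑ K ∈ Finset.Icc 1 (Ko - 1), P (B N K) :=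
          add_le_add (measure_biUnion_finset_le _ _) (measure_biUnion_finset_le _ _)
  -- bad probability tends to 0
  have htendA : ∀ k ∈ Finset.Icc 1 Ko, Tendsto (fun N => P (A N k)) atTop (nhds 0) := by
    intro k hk
    have h1 := (Finset.mem_Icc.mp hk).1
    have h2 := (Finset.mem_Icc.mp hk).2
    exact tendstoInMeasure_iff_dist.mp (hKoConv k h1 h2) (ρ - L k) (by linarith [hLlt k h1 h2])
  have htendB : ∀ K ∈ Finset.Icc 1 (Ko - 1), Tendsto (fun N => P (B N K)) atTop (nhds 0) := by
    intro K hK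
    have h1 := (Finset.mem_Icc.mp hK).1
    have h2 : K < Ko := by have := (Finset.mem_Icc.mp hK).2; omega
    obtain ⟨hck1, hck2, hlρ, hconv⟩ := hcl K h1 h2
    exact tendstoInMeasure_iff_dist.mp hconv (l K - ρ) (by linarith)
  have hbad : Tendsto (fun N => P {ω | Khat N ω ≠ Ko}) atTop (nhds 0) := by
    have hsum : Tendsto (fun N => (∑ k ∈ Finset.Icc 1 Ko, P (A N k)) +
        ∑ K ∈ Finset.Icc 1 (Ko - 1), P (B N K)) atTop (nhds 0) := by
      have h0 : (0 : ENNReal) = (∑ _k ∈ Finset.Icc 1 Ko, 0) +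
          ∑ _K ∈ Finset.Icc 1 (Ko - 1), (0 : ENNReal) := by simp
      rw [h0]
      exact Tendsto.add (tendsto_finset_sum _ htendA) (tendsto_finset_sum _ htendB)
    exact tendsto_of_tendsto_of_tendsto_of_le_of_le tendsto_const_nhds hsum
      (fun N => zero_le') hbound
  -- conclude
  have hlow : ∀ N, 1 - P {ω | Khat N ω ≠ Ko} ≤ P {ω | Khat N ω = Ko} := by
    intro N
    have : (1 : ENNReal) ≤ P {ω | Khat N ω = Ko} + P {ω | Khat N ω ≠ Ko} := by
      have huniv : {ω | Khat N ω = Ko} ∪ {ω | Khat N ω ≠ Ko} = Set.univ := by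
        ext ω; simp [em]
      calc (1 : ENNReal) = P Set.univ := (measure_univ).symm
        _ = P ({ω | Khat N ω = Ko} ∪ {ω | Khat N ω ≠ Ko}) := by rw [huniv]
        _ ≤ _ := measure_union_le _ _
    exact tsub_le_iff_right.mpr this
  have hlowt : Tendsto (fun N => 1 - P {ω | Khat N ω ≠ Ko}) atTop (nhds 1) := by
    have := ENNReal.Tendsto.sub (tendsto_const_nhds (x := (1 : ENNReal))) hbad
      (Or.inl ENNReal.one_ne_top)
    simpa using this
  exact tendsto_of_tendsto_of_tendsto_of_le_of_le hlowt tendsto_const_nhds hlow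
    (fun N => prob_le_one)
end
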